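/- Let n ≥ 1, let γ₁,…,γₙ be positive reals, and let Q : ℝⁿ → [0,1]ⁿ be any continuous map. Let x : [0,∞) → ℝⁿ be differentiable and satisfy ẋᵢ(t) = γᵢ·(g(xᵢ(t)) + 6·Qᵢ(x(t))) for all t ≥ 0 and all i ∈ [n]. If xᵢ(0) ∈ [x⁻, x⁺] for all i ∈ [n], then xᵢ(t) ∈ [x⁻, x⁺] for all t ≥ 0 and all i ∈ [n]. In other words, the box [x⁻, x⁺]ⁿ is forward invariant for the system ẋᵢ = γᵢ(g(xᵢ) + 6Qᵢ(x)); applied with N = 2n variables this also gives forward invariance of [x⁻, x⁺]^{2n} for the systems D₂(f,γ). -/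

import Mathlib

/-!
Each coordinate is a scalar function whose derivative is `γᵢ (g(xᵢ) + 6 Qᵢ)` with `Qᵢ ∈ [0, 1]`.
Below `x⁻` the cubic `g` is positive, and above `x⁺` it is below `-6` (since `g(y) + 6 = -g(-y)`),
so the velocity points strictly back into `[x⁻, x⁺]` outside it. A scalar barrier argument then
shows no coordinate can leave: after the last time `s` at which it was on the right side of the
barrier, the mean value theorem on `[s, t]` moves it back across.
-/

open Set

theorem le_of_hasDerivAt_neg_of_gt {f f' : ℝ → ℝ} {a b B : ℝ}
    (hf : ContinuousOn f (Icc a b)) (hf' : ∀ x ∈ Ioo a b, HasDerivAt f (f' x) x)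
    (ha : f a ≤ B) (hneg : ∀ x ∈ Ioo a b, B < f x → f' x < 0) :
    ∀ x ∈ Icc a b, f x ≤ B := by
  intro x hx
  by_contra! hfx
  set S := Icc a x ∩ f ⁻¹' Iic B
  have hS : IsCompact S := isCompact_Icc.of_isClosed_subset
    ((hf.mono (Icc_subset_Icc_right hx.2)).preimage_isClosed_of_isClosed isClosed_Icc isClosed_Iic)
    inter_subset_left
  obtain ⟨s, ⟨hs, hfs : f s ≤ B⟩, hs_last⟩ := hS.exists_isGreatest ⟨a, ⟨le_rfl, hx.1⟩, ha⟩
  have hsx : s < x := lt_of_le_of_ne hs.2 (by rintro rfl; exact hfx.not_ge hfs)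
  have hsub : Icc s x ⊆ Icc a b := Icc_subset_Icc hs.1 hx.2
  have hsub' : Ioo s x ⊆ Ioo a b := Ioo_subset_Ioo hs.1 hx.2
  obtain ⟨c, hc, hslope⟩ := exists_hasDerivAt_eq_slope f f' hsx (hf.mono hsub)
    (fun y hy => hf' y (hsub' hy))
  have hfc : B < f c := by
    by_contra! h
    exact hc.1.not_ge (hs_last ⟨⟨hs.1.trans hc.1.le, hc.2.le⟩, h⟩)
  have hdrop := hneg c (hsub' hc) hfc
  rw [hslope, div_lt_iff₀ (sub_pos.mpr hsx), zero_mul] at hdrop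
  linarith

theorem le_of_hasDerivAt_pos_of_lt {f f' : ℝ → ℝ} {a b B : ℝ}
    (hf : ContinuousOn f (Icc a b)) (hf' : ∀ x ∈ Ioo a b, HasDerivAt f (f' x) x)
    (ha : B ≤ f a) (hpos : ∀ x ∈ Ioo a b, f x < B → 0 < f' x) :
    ∀ x ∈ Icc a b, B ≤ f x := by
  intro x hx
  have := le_of_hasDerivAt_neg_of_gt (f := -f) (f' := -f') (B := -B) hf.neg
    (fun y hy => (hf' y hy).neg) (neg_le_neg ha)
    (fun y hy h => neg_neg_of_pos (hpos y hy (neg_lt_neg_iff.mp h))) x hx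
  exact neg_le_neg_iff.mp this

theorem lt_neg_two_of_cubic_root {xm : ℝ} (hxm : 3 * xm - xm ^ 3 - 3 = 0) : xm < -2 := by
  nlinarith [sq_nonneg (xm - 1), sq_nonneg (xm + 2)]

theorem cubic_pos_of_lt_root {xm y : ℝ} (hxm : 3 * xm - xm ^ 3 - 3 = 0) (hy : y < xm) :
    0 < 3 * y - y ^ 3 - 3 := by
  have hxm2 := lt_neg_two_of_cubic_root hxm
  -- `g(y) - g(x⁻) = (x⁻ - y)(y² + y x⁻ + x⁻² - 3)`, and both factors are positive
  have hquad : 0 < y ^ 2 + y * xm + xm ^ 2 - 3 := by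
    nlinarith [mul_pos (show (0 : ℝ) < -y by linarith) (show (0 : ℝ) < -xm by linarith)]
  nlinarith [mul_pos (sub_pos.mpr hy) hquad]

theorem cubic_lt_neg_six_of_gt_neg_root {xm y : ℝ} (hxm : 3 * xm - xm ^ 3 - 3 = 0)
    (hy : -xm < y) : 3 * y - y ^ 3 - 3 < -6 := by
  have := cubic_pos_of_lt_root hxm (neg_lt.mp hy)
  linarith

theorem stmt_2 (n : ℕ) (γ : Fin n → ℝ) (hγ : ∀ i, 0 < γ i)
    (Q : (Fin n → ℝ) → Fin n → ℝ)
    (hQ01 : ∀ x i, Q x i ∈ Set.Icc (0 : ℝ) 1)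
    (xm : ℝ) (hxm : 3 * xm - xm ^ 3 - 3 = 0)
    (x : ℝ → Fin n → ℝ)
    (hode : ∀ i : Fin n, ∀ t : ℝ, 0 ≤ t →
      HasDerivAt (fun u => x u i)
        (γ i * ((3 * x t i - (x t i) ^ 3 - 3) + 6 * Q (x t) i)) t)
    (h0 : ∀ i, x 0 i ∈ Set.Icc xm (-xm)) :
    ∀ t : ℝ, 0 ≤ t → ∀ i, x t i ∈ Set.Icc xm (-xm) := by
  intro t ht i
  have hcont : ContinuousOn (fun u => x u i) (Icc 0 t) :=
    fun u hu => (hode i u hu.1).continuousAt.continuousWithinAt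
  have hderiv : ∀ u ∈ Ioo 0 t, HasDerivAt (fun u => x u i) _ u := fun u hu => hode i u hu.1.le
  have hT : t ∈ Icc 0 t := ⟨ht, le_rfl⟩
  constructor
  · refine le_of_hasDerivAt_pos_of_lt hcont hderiv (h0 i).1 (fun u _ hu => ?_) t hT
    have := cubic_pos_of_lt_root hxm hu
    have := (hQ01 (x u) i).1
    exact mul_pos (hγ i) (by linarith)
  · refine le_of_hasDerivAt_neg_of_gt hcont hderiv (h0 i).2 (fun u _ hu => ?_) t hT
    have := cubic_lt_neg_six_of_gt_neg_root hxm hu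
    have := (hQ01 (x u) i).2
    exact mul_neg_of_pos_of_neg (hγ i) (by linarith)
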